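/- arXiv:2501.00123 — 5 statements merged into one kernel-verified Lean document; each statement's English description precedes it below -/
import Mathlib

section
/- In any loop L, if an element c lies in the commutative center (i.e., commutes with all elements) and belongs to any two of the three one-sided nuclei (left, middle, right), then c lies in the center of L. -/
universe u

class Loop (L : Type u) extends Mul L, One L where
  ldiv : L → L → L
  rdiv : L → L → L
  mul_ldiv : ∀ a b : L, a * ldiv a b = b
  ldiv_mul : ∀ a b : L, ldiv a (a * b) = b
  rdiv_mul : ∀ a b : L, rdiv b a * a = b
  mul_rdiv : ∀ a b : L, rdiv (b * a) a = b
  one_mul : ∀ a : L, 1 * a = a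
  mul_one : ∀ a : L, a * 1 = a

section Magma
variable {M : Type u} (mul : M → M → M)

/-- Left nucleus of a magma. -/
def leftNucS : Set M := {a | ∀ x y, mul (mul a x) y = mul a (mul x y)}
/-- Middle nucleus of a magma. -/
def midNucS : Set M := {a | ∀ x y, mul (mul x a) y = mul x (mul a y)}
/-- Right nucleus of a magma. -/
def rightNucS : Set M := {a | ∀ x y, mul (mul x y) a = mul x (mul y a)}
/-- Nucleus of a magma. -/
def nucS : Set M := leftNucS mul ∩ midNucS mul ∩ rightNucS mul
/-- Commutant (commutative center) of a magma. -/
def commutantS : Set M := {a | ∀ x, mul a x = mul x a}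
/-- Center of a magma: the commutant intersected with the nucleus. -/
def centerS : Set M := commutantS mul ∩ nucS mul
end Magma

namespace Loop
variable {L : Type u} [Loop L]

/-- The left inverse `a^λ`, satisfying `a^λ * a = 1`. -/
def linv (a : L) : L := Loop.rdiv 1 a
/-- The right inverse `a^ρ`, satisfying `a * a^ρ = 1`. -/
def rinv (a : L) : L := Loop.ldiv a 1
/-- The commutator `[a,b]`, defined by `a*b = (b*a)*[a,b]`. -/
def comm (a b : L) : L := Loop.ldiv (b*a) (a*b)
/-- The associator `[a,b,c]`, defined by `(a*b)*c = (a*(b*c))*[a,b,c]`. -/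
def assoc (a b c : L) : L := Loop.ldiv (a*(b*c)) ((a*b)*c)

end Loop

/-- The nucleus of a loop. -/
abbrev LNuc (L : Type u) [Loop L] : Set L := nucS (fun x y : L => x * y)
/-- The commutant of a loop. -/
abbrev LCommutant (L : Type u) [Loop L] : Set L := commutantS (fun x y : L => x * y)
/-- The center of a loop. -/
abbrev LCenter (L : Type u) [Loop L] : Set L := centerS (fun x y : L => x * y)

/-! Moving a commuting element `c` from one end of a product to the other, e.g.
`(x * y) * c = c * (x * y) = (c * x) * y = (x * c) * y = x * (c * y) = x * (y * c)`,
converts any two of the three nucleus identities into the third. -/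

section Magma
variable {M : Type u} {mul : M → M → M} {c : M}

theorem mem_rightNucS_of_mem_commutantS_of_mem_leftNucS_of_mem_midNucS
    (hc : c ∈ commutantS mul) (hl : c ∈ leftNucS mul) (hm : c ∈ midNucS mul) :
    c ∈ rightNucS mul := fun x y =>
  calc mul (mul x y) c = mul c (mul x y) := (hc _).symm
    _ = mul (mul c x) y := (hl x y).symm
    _ = mul (mul x c) y := by rw [hc]
    _ = mul x (mul c y) := hm x y
    _ = mul x (mul y c) := by rw [hc]

theorem mem_midNucS_of_mem_commutantS_of_mem_leftNucS_of_mem_rightNucS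
    (hc : c ∈ commutantS mul) (hl : c ∈ leftNucS mul) (hr : c ∈ rightNucS mul) :
    c ∈ midNucS mul := fun x y =>
  calc mul (mul x c) y = mul (mul c x) y := by rw [hc]
    _ = mul c (mul x y) := hl x y
    _ = mul (mul x y) c := hc _
    _ = mul x (mul y c) := hr x y
    _ = mul x (mul c y) := by rw [hc]

theorem mem_leftNucS_of_mem_commutantS_of_mem_midNucS_of_mem_rightNucS
    (hc : c ∈ commutantS mul) (hm : c ∈ midNucS mul) (hr : c ∈ rightNucS mul) :
    c ∈ leftNucS mul := fun x y =>
  calc mul (mul c x) y = mul (mul x c) y := by rw [hc]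
    _ = mul x (mul c y) := hm x y
    _ = mul x (mul y c) := by rw [hc]
    _ = mul (mul x y) c := (hr x y).symm
    _ = mul c (mul x y) := (hc _).symm

end Magma

/-- In any loop, an element of the commutant belonging to any two of the
three one-sided nuclei lies in the center. -/
theorem stmt0 {L : Type u} [Loop L] (c : L) (hc : c ∈ LCommutant L)
    (h2 : (c ∈ leftNucS (fun x y : L => x * y) ∧ c ∈ midNucS (fun x y : L => x * y)) ∨
          (c ∈ leftNucS (fun x y : L => x * y) ∧ c ∈ rightNucS (fun x y : L => x * y)) ∨
          (c ∈ midNucS (fun x y : L => x * y) ∧ c ∈ rightNucS (fun x y : L => x * y))) :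
    c ∈ LCenter L := by
  refine ⟨hc, ?_⟩
  rcases h2 with ⟨hl, hm⟩ | ⟨hl, hr⟩ | ⟨hm, hr⟩
  · exact ⟨⟨hl, hm⟩, mem_rightNucS_of_mem_commutantS_of_mem_leftNucS_of_mem_midNucS hc hl hm⟩
  · exact ⟨⟨hl, mem_midNucS_of_mem_commutantS_of_mem_leftNucS_of_mem_rightNucS hc hl hr⟩, hr⟩
  · exact ⟨⟨mem_leftNucS_of_mem_commutantS_of_mem_midNucS_of_mem_rightNucS hc hm hr, hm⟩, hr⟩
end

section
/- In any central-by-abelian loop, the identity [a,b,c][c,b,a] = [a,b][a,bc]^{-1}[ab,c][b,c]^{-1} holds for all a,b,c. -/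
universe u

/-! Central elements of a loop form an abelian group `Z(L)`, and a central factor can be moved
anywhere in a product. Expanding `(ab)c` over `c(ba)` once through commutators,
`(ab)c = (c(ba))·[a,b][ab,c]`, and once through associators and commutators,
`(ab)c = (c(ba))·[c,b,a][b,c][a,bc][a,b,c]`, and cancelling `c(ba)` on the left gives an identity
in `Z(L)` that rearranges to the claim. -/

namespace Loop

variable {L : Type u} [Loop L]

lemma mul_left_cancel {a x y : L} (h : a * x = a * y) : x = y := by
  simpa only [ldiv_mul] using congrArg (ldiv a) h

lemma mul_rinv (a : L) : a * rinv a = 1 := mul_ldiv a 1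

lemma comm_spec (a b : L) : b * a * comm a b = a * b := mul_ldiv _ _

lemma assoc_spec (a b c : L) : a * (b * c) * assoc a b c = a * b * c := mul_ldiv _ _

lemma mem_center_of {z : L} (hcomm : ∀ x, z * x = x * z)
    (hleft : ∀ x y, z * x * y = z * (x * y)) (hmid : ∀ x y, x * z * y = x * (z * y))
    (hright : ∀ x y, x * y * z = x * (y * z)) : z ∈ LCenter L :=
  ⟨hcomm, ⟨⟨hleft, hmid⟩, hright⟩⟩

section Center

variable {z : L} (hz : z ∈ LCenter L)
include hz

lemma comm_of_mem_center (x : L) : z * x = x * z := hz.1 x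

lemma left_assoc_of_mem_center (x y : L) : z * x * y = z * (x * y) := hz.2.1.1 x y

lemma mid_assoc_of_mem_center (x y : L) : x * z * y = x * (z * y) := hz.2.1.2 x y

lemma right_assoc_of_mem_center (x y : L) : x * y * z = x * (y * z) := hz.2.2 x y

lemma mul_left_comm_of_mem_center (x y : L) : z * (x * y) = x * (z * y) := by
  rw [← left_assoc_of_mem_center hz, comm_of_mem_center hz, mid_assoc_of_mem_center hz]

lemma mul_right_comm_of_mem_center (x y : L) : x * z * y = x * y * z := by
  rw [mid_assoc_of_mem_center hz, comm_of_mem_center hz, right_assoc_of_mem_center hz]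

lemma rinv_mul_of_mem_center : rinv z * z = 1 := by
  rw [← comm_of_mem_center hz, mul_rinv]

-- Each identity for `rinv z` is checked after left multiplication by `z`, which can be moved
-- into any factor until it meets `rinv z`.
lemma rinv_mem_center : rinv z ∈ LCenter L := by
  have left := left_assoc_of_mem_center hz
  have push := mul_left_comm_of_mem_center hz
  refine mem_center_of (fun x => ?_) (fun x y => ?_) (fun x y => ?_) (fun x y => ?_) <;>
    apply mul_left_cancel (a := z)
  · rw [← left, push, mul_rinv, one_mul, mul_one]
  · rw [← left, ← left, mul_rinv, one_mul, ← left, mul_rinv, one_mul]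
  · rw [← left, ← left, comm_of_mem_center hz x, mid_assoc_of_mem_center hz, mul_rinv, mul_one,
      push, ← left, mul_rinv, one_mul]
  · rw [push, mul_rinv, mul_one, push, push, mul_rinv, mul_one]

end Center

lemma mul_mem_center {z w : L} (hz : z ∈ LCenter L) (hw : w ∈ LCenter L) :
    z * w ∈ LCenter L := by
  refine mem_center_of (fun x => ?_) (fun x y => ?_) (fun x y => ?_) (fun x y => ?_)
  · rw [left_assoc_of_mem_center hz, comm_of_mem_center hw, ← left_assoc_of_mem_center hz,
      comm_of_mem_center hz, mid_assoc_of_mem_center hz]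
  · rw [left_assoc_of_mem_center hz, left_assoc_of_mem_center hz, left_assoc_of_mem_center hw,
      ← left_assoc_of_mem_center hz]
  · rw [← mid_assoc_of_mem_center hz, mid_assoc_of_mem_center hw, mid_assoc_of_mem_center hz,
      left_assoc_of_mem_center hz]
  · rw [← mid_assoc_of_mem_center hz, right_assoc_of_mem_center hz, right_assoc_of_mem_center hw,
      mid_assoc_of_mem_center hz]

lemma one_mem_center : (1 : L) ∈ LCenter L :=
  mem_center_of (fun x => by rw [one_mul, mul_one]) (fun x y => by rw [one_mul, one_mul])
    (fun x y => by rw [mul_one, one_mul]) (fun x y => by rw [mul_one, mul_one])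

instance : CommGroup (LCenter L) where
  mul z w := ⟨z * w, mul_mem_center z.2 w.2⟩
  one := ⟨1, one_mem_center⟩
  inv z := ⟨rinv z, rinv_mem_center z.2⟩
  mul_assoc z w v := Subtype.ext (left_assoc_of_mem_center z.2 w v)
  one_mul z := Subtype.ext (one_mul (z : L))
  mul_one z := Subtype.ext (mul_one (z : L))
  inv_mul_cancel z := Subtype.ext (rinv_mul_of_mem_center z.2)
  mul_comm z w := Subtype.ext (comm_of_mem_center z.2 w)

lemma mul_mul_eq_of_comm (a b c : L) (hab : comm a b ∈ LCenter L)
    (hab_c : comm (a * b) c ∈ LCenter L) :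
    a * b * c = c * (b * a) * (comm a b * comm (a * b) c) :=
  calc a * b * c = c * (a * b) * comm (a * b) c := (comm_spec _ _).symm
    _ = c * (b * a * comm a b) * comm (a * b) c := by rw [comm_spec a b]
    _ = c * (b * a) * (comm a b * comm (a * b) c) := by
      rw [← right_assoc_of_mem_center hab, right_assoc_of_mem_center hab_c]

lemma mul_mul_eq_of_assoc (a b c : L) (hA : assoc a b c ∈ LCenter L)
    (hbc : comm b c ∈ LCenter L) (ha_bc : comm a (b * c) ∈ LCenter L) :
    a * b * c = c * (b * a) * (assoc c b a * comm b c * comm a (b * c) * assoc a b c) :=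
  calc a * b * c = a * (b * c) * assoc a b c := (assoc_spec a b c).symm
    _ = b * c * a * comm a (b * c) * assoc a b c := by rw [comm_spec]
    _ = c * b * comm b c * a * comm a (b * c) * assoc a b c := by rw [comm_spec b c]
    _ = c * b * a * comm b c * comm a (b * c) * assoc a b c := by
      rw [mul_right_comm_of_mem_center hbc]
    _ = c * (b * a) * assoc c b a * comm b c * comm a (b * c) * assoc a b c := by
      rw [assoc_spec c b a]
    _ = c * (b * a) * (assoc c b a * comm b c * comm a (b * c) * assoc a b c) := by
      rw [right_assoc_of_mem_center hbc, right_assoc_of_mem_center ha_bc,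
        right_assoc_of_mem_center hA]

end Loop

/-- In any central-by-abelian loop,
`[a,b,c][c,b,a] = [a,b][a,bc]⁻¹[ab,c][b,c]⁻¹`. -/
theorem stmt2 {L : Type u} [Loop L]
    (hcomm : ∀ a b : L, Loop.comm a b ∈ LCenter L)
    (hassoc : ∀ a b c : L, Loop.assoc a b c ∈ LCenter L)
    (a b c : L) :
    Loop.assoc a b c * Loop.assoc c b a =
      ((Loop.comm a b * Loop.rinv (Loop.comm a (b*c))) * Loop.comm (a*b) c) *
        Loop.rinv (Loop.comm b c) := by
  let A : LCenter L := ⟨_, hassoc a b c⟩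
  let A' : LCenter L := ⟨_, hassoc c b a⟩
  let Kab : LCenter L := ⟨_, hcomm a b⟩
  let Kbc : LCenter L := ⟨_, hcomm b c⟩
  let Ka_bc : LCenter L := ⟨_, hcomm a (b * c)⟩
  let Kab_c : LCenter L := ⟨_, hcomm (a * b) c⟩
  have key : A' * Kbc * Ka_bc * A = Kab * Kab_c := Subtype.ext <| Loop.mul_left_cancel <|
    (Loop.mul_mul_eq_of_assoc a b c A.2 Kbc.2 Ka_bc.2).symm.trans
      (Loop.mul_mul_eq_of_comm a b c Kab.2 Kab_c.2)
  have : A * A' = Kab * Ka_bc⁻¹ * Kab_c * Kbc⁻¹ := by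
    rw [mul_right_comm Kab, ← key]
    simp only [mul_comm, mul_assoc, mul_left_comm, mul_inv_cancel_left, mul_inv_cancel, one_mul]
  exact congrArg Subtype.val this
end

section
/- Let (L,*) be a loop with involution, γ, ε central elements of L. The formula (aj)^* = (εa)j extends the involution * from L to an involution of the Cayley-Dickson double D(L,*,γ) if and only if ε² = 1 and (εγ)^* = εγ. -/
universe u

/-- Multiplication of the Cayley–Dickson double `D(L,*,γ) = L ∪ Lj`,
encoded on `L × Bool` with `(a, false) = a` and `(a, true) = a·j`. -/
def CDmul {L : Type u} [Loop L] (star : L → L) (γ : L) :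
    L × Bool → L × Bool → L × Bool
  | (a, false), (b, false) => (a * b, false)
  | (a, false), (b, true)  => (b * a, true)
  | (a, true),  (b, false) => (a * star b, true)
  | (a, true),  (b, true)  => (γ * (star b * a), false)

/-- Extension of the involution `(a·j)^* = (ε·a)·j` used in the double. -/
def CDstar {L : Type u} [Loop L] (star : L → L) (ε : L) : L × Bool → L × Bool
  | (a, false) => (star a, false)
  | (a, true)  => (ε * a, true)

/-!
Central elements of a loop commute and associate with everything, and `*` maps them to central
elements. Testing the two involution laws of the double on `j` alone forces `ε² = 1` and
`γ^* = γ (ε^* ε)`; conversely these two identities turn every case of the laws into a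
rearrangement of central factors. When `ε² = 1`, right multiplication by `ε^*` is an involution,
which turns `γ^* = γ (ε^* ε)` into `γ^* ε^* = γ ε`, i.e. `(εγ)^* = εγ`.
-/

theorem LCenter_subset_center {L : Type u} [Loop L] : LCenter L ⊆ Set.center L :=
  fun _ ⟨hcomm, ⟨hleft, _⟩, hright⟩ =>
    ⟨fun a => hcomm a, fun b c => (hleft b c).symm, hright⟩

namespace Loop

variable {L : Type u} [Loop L] {star : L → L}

theorem star_one (hanti : ∀ a b : L, star (a * b) = star b * star a) : star 1 = 1 := by
  have h : star 1 * star 1 = star 1 * 1 := by rw [Loop.mul_one, ← hanti, Loop.one_mul]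
  simpa only [Loop.ldiv_mul] using congrArg (Loop.ldiv (star 1)) h

theorem star_mem_center (hstar : Function.Involutive star)
    (hanti : ∀ a b : L, star (a * b) = star b * star a) {z : L} (hz : z ∈ Set.center L) :
    star z ∈ Set.center L :=
  letI : StarMul L := { star, star_involutive := hstar, star_mul := hanti }
  Set.star_mem_center hz

theorem CDstar_involutive_iff (hstar : Function.Involutive star) {ε : L}
    (hε : ε ∈ Set.center L) : Function.Involutive (CDstar star ε) ↔ ε * ε = 1 := by
  constructor
  · intro h
    simpa only [CDstar, Loop.mul_one, Prod.mk.injEq, and_true] using h (1, true)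
  · rintro hεε ⟨a, _ | _⟩
    · simp only [CDstar, hstar a]
    · simp only [CDstar, hε.left_assoc, hεε, Loop.one_mul]

theorem CDstar_antimul_iff (hstar : Function.Involutive star)
    (hanti : ∀ a b : L, star (a * b) = star b * star a) {γ ε : L}
    (hγ : γ ∈ Set.center L) (hε : ε ∈ Set.center L) :
    (∀ x y : L × Bool, CDstar star ε (CDmul star γ x y) =
        CDmul star γ (CDstar star ε y) (CDstar star ε x)) ↔
      star γ = γ * (star ε * ε) := by
  have hsε := star_mem_center hstar hanti hε
  constructor
  · intro h
    simpa only [CDstar, CDmul, star_one hanti, Loop.one_mul, Loop.mul_one, Prod.mk.injEq,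
      and_true] using h (1, true) (1, true)
  · rintro hstarγ ⟨a, _ | _⟩ ⟨b, _ | _⟩
    · simp only [CDstar, CDmul, hanti]
    · simp only [CDstar, CDmul, hstar a, hε.left_assoc]
    · simp only [CDstar, CDmul, hε.left_assoc]
    · have hδ := Set.mul_mem_center hsε hε
      simp only [CDstar, CDmul, Prod.mk.injEq, and_true]
      calc star (γ * (star b * a)) = (star a * b) * (γ * (star ε * ε)) := by
            rw [hanti, hanti, hstar b, hstarγ]
        _ = γ * ((star a * b) * (star ε * ε)) := (hγ.left_comm _ _).symm
        _ = γ * ((star a * star ε) * (ε * b)) := by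
            rw [hsε.mid_assoc, hsε.left_assoc, (hδ.comm b).eq, hδ.right_assoc]
        _ = γ * (star (ε * a) * (ε * b)) := by rw [hanti]

theorem star_eq_mul_star_mul_iff (hstar : Function.Involutive star)
    (hanti : ∀ a b : L, star (a * b) = star b * star a) {γ ε : L}
    (hε : ε ∈ Set.center L) (hεε : ε * ε = 1) :
    star γ = γ * (star ε * ε) ↔ star (ε * γ) = ε * γ := by
  have hsε := star_mem_center hstar hanti hε
  have hsεsε : star ε * star ε = 1 := by rw [← hanti, hεε, star_one hanti]
  have hinv : Function.Involutive (· * star ε) := fun y => show y * star ε * star ε = y by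
    rw [hsε.right_assoc, hsεsε, Loop.mul_one]
  have key : γ * (star ε * ε) * star ε = ε * γ := by
    rw [hsε.right_assoc, (hsε.comm ε).eq, hsε.right_assoc, hsεsε, Loop.mul_one,
      (hε.comm γ).eq]
  rw [hanti, ← key, hinv.injective.eq_iff]

end Loop

/-- `(aj)^* = (εa)j` extends the involution from `L` to `D(L,*,γ)` iff
`ε² = 1` and `(εγ)^* = εγ`. -/
theorem stmt11 {L : Type u} [Loop L] (star : L → L)
    (hstar2 : ∀ a : L, star (star a) = a)
    (hanti : ∀ a b : L, star (a * b) = star b * star a)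
    (γ ε : L) (hγ : γ ∈ LCenter L) (hε : ε ∈ LCenter L) :
    ((∀ x : L × Bool, CDstar star ε (CDstar star ε x) = x) ∧
     (∀ x y : L × Bool, CDstar star ε (CDmul star γ x y) =
        CDmul star γ (CDstar star ε y) (CDstar star ε x))) ↔
      (ε * ε = 1 ∧ star (ε * γ) = ε * γ) := by
  have hγ' := LCenter_subset_center hγ
  have hε' := LCenter_subset_center hε
  refine (and_congr (Loop.CDstar_involutive_iff hstar2 hε')
    (Loop.CDstar_antimul_iff hstar2 hanti hγ' hε')).trans ?_
  exact and_congr_right fun hεε => Loop.star_eq_mul_star_mul_iff hstar2 hanti hε' hεε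
end

section
/- Let (L,*) be a loop with involution, γ central, M = D(L,*,γ). Then the intersections with L of the nuclei of M are: Nuc_ℓ(M) ∩ L = Nuc_r(M) ∩ L = Z(L), Nuc_m(M) ∩ L = Nuc_m(L) ∩ K(L), and Nuc(M) ∩ L = Z(L). -/
/-!
An element `a ∈ L` lies in a nucleus of `D(L,*,γ)` iff four identities hold in `L`, one for each
choice of components `L` or `Lj` of the two other factors. Putting `1` for one factor forces `a`
into the commutant. Since `*` is an anti-automorphism, it preserves the commutant and the middle
nucleus of `L` and swaps the left and right nuclei, which turns the remaining identities into
nuclear conditions on `a` or `a*`.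
-/

universe u

section Mul

variable {M : Type u} [Mul M] {a : M}

theorem mem_leftNucS : a ∈ leftNucS (· * · : M → M → M) ↔ ∀ x y, a * x * y = a * (x * y) :=
  Iff.rfl

theorem mem_midNucS : a ∈ midNucS (· * · : M → M → M) ↔ ∀ x y, x * a * y = x * (a * y) :=
  Iff.rfl

theorem mem_rightNucS : a ∈ rightNucS (· * · : M → M → M) ↔ ∀ x y, x * y * a = x * (y * a) :=
  Iff.rfl

theorem mem_commutantS : a ∈ commutantS (· * · : M → M → M) ↔ ∀ x, a * x = x * a :=
  Iff.rfl

theorem mem_centerS : a ∈ centerS (· * · : M → M → M) ↔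
    a ∈ commutantS (· * · : M → M → M) ∧ a ∈ leftNucS (· * · : M → M → M) ∧
      a ∈ midNucS (· * · : M → M → M) ∧ a ∈ rightNucS (· * · : M → M → M) := by
  simp only [centerS, nucS, Set.mem_inter_iff, and_assoc]

variable [StarMul M]

theorem star_mem_commutantS_iff :
    star a ∈ commutantS (· * · : M → M → M) ↔ a ∈ commutantS (· * · : M → M → M) := by
  simp only [mem_commutantS]
  rw [star_involutive.surjective.forall]
  simp only [← star_mul, star_inj]
  exact forall_congr' fun _ => eq_comm

theorem star_mem_midNucS_iff :
    star a ∈ midNucS (· * · : M → M → M) ↔ a ∈ midNucS (· * · : M → M → M) := by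
  simp only [mem_midNucS]
  rw [star_involutive.surjective.forall₂]
  simp only [← star_mul, star_inj]
  rw [forall_comm]
  exact forall₂_congr fun _ _ => eq_comm

theorem star_mem_rightNucS_iff :
    star a ∈ rightNucS (· * · : M → M → M) ↔ a ∈ leftNucS (· * · : M → M → M) := by
  simp only [mem_rightNucS, mem_leftNucS]
  rw [star_involutive.surjective.forall₂]
  simp only [← star_mul, star_inj]
  rw [forall_comm]
  exact forall₂_congr fun _ _ => eq_comm

end Mul

namespace CDmul

variable {L : Type u} [Loop L] [StarMul L] {γ a : L}

theorem mk_false_mem_leftNucS_iff :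
    ((a, false) : L × Bool) ∈ leftNucS (CDmul star γ) ↔
      a ∈ leftNucS (· * · : L → L → L) ∧ (∀ x y, y * (a * x) = y * x * a) ∧
      (∀ x y, x * a * star y = x * star y * a) ∧
      (∀ x y, γ * (star y * (x * a)) = a * (γ * (star y * x))) := by
  simp only [leftNucS, Set.mem_ofPred_eq, Prod.forall, Bool.forall_bool, CDmul, Prod.mk.injEq,
    and_true, forall_and]
  tauto

theorem mk_false_mem_midNucS_iff :
    ((a, false) : L × Bool) ∈ midNucS (CDmul star γ) ↔
      a ∈ midNucS (· * · : L → L → L) ∧ (∀ x y, y * (x * a) = y * a * x) ∧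
      (∀ x y, x * star a * star y = x * star (a * y)) ∧
      (∀ x y, γ * (star y * (x * star a)) = γ * (star (y * a) * x)) := by
  simp only [midNucS, Set.mem_ofPred_eq, Prod.forall, Bool.forall_bool, CDmul, Prod.mk.injEq,
    and_true, forall_and]
  tauto

theorem mk_false_mem_rightNucS_iff :
    ((a, false) : L × Bool) ∈ rightNucS (CDmul star γ) ↔
      a ∈ rightNucS (· * · : L → L → L) ∧ (∀ x y, y * x * star a = y * star a * x) ∧
      (∀ x y, x * star y * star a = x * star (y * a)) ∧
      (∀ x y, γ * (star y * x) * a = γ * (star (y * star a) * x)) := by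
  simp only [rightNucS, Set.mem_ofPred_eq, Prod.forall, Bool.forall_bool, CDmul, Prod.mk.injEq,
    and_true, forall_and]
  tauto

theorem mk_false_mem_leftNucS_iff_mem_centerS (hγc : γ ∈ LCommutant L)
    (hγl : γ ∈ leftNucS (· * · : L → L → L)) :
    ((a, false) : L × Bool) ∈ leftNucS (CDmul star γ) ↔ a ∈ LCenter L := by
  rw [mk_false_mem_leftNucS_iff, mem_centerS]
  constructor
  · rintro ⟨hl, h₂, h₃, -⟩
    have hc : ∀ x, a * x = x * a := fun x => by simpa only [Loop.one_mul] using h₂ x 1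
    have hr : ∀ x y, x * y * a = x * (y * a) := fun x y => by rw [← h₂, hc y]
    refine ⟨hc, hl, mem_midNucS.2 fun x y => ?_, hr⟩
    rw [← star_star y, h₃, hr, hc]
  · rintro ⟨hc, hl, hm, hr⟩
    rw [mem_commutantS] at hc hγc
    rw [mem_leftNucS] at hl hγl
    rw [mem_midNucS] at hm
    rw [mem_rightNucS] at hr
    refine ⟨mem_leftNucS.2 hl, fun x y => ?_, fun x y => ?_, fun x y => ?_⟩
    · rw [hc x, hr]
    · rw [hm, hc, hr]
    · rw [← hr, ← hc (star y * x), ← hγl, hγc a, hl]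

theorem mk_false_mem_rightNucS_iff_mem_centerS :
    ((a, false) : L × Bool) ∈ rightNucS (CDmul star γ) ↔ a ∈ LCenter L := by
  rw [mk_false_mem_rightNucS_iff, mem_centerS]
  constructor
  · rintro ⟨hr, h₂, h₃, -⟩
    have h₃' : ∀ x y, x * y * star a = x * (star a * y) := fun x y => by
      simpa only [star_star, star_mul] using h₃ x (star y)
    have hc : ∀ x, star a * x = x * star a := fun x => by
      simpa only [Loop.one_mul] using (h₃' 1 x).symm
    have hr' : ∀ x y, x * y * star a = x * (y * star a) := fun x y => by rw [h₃', hc y]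
    refine ⟨star_mem_commutantS_iff.1 hc, star_mem_rightNucS_iff.1 hr',
      star_mem_midNucS_iff.1 (mem_midNucS.2 fun x y => ?_), hr⟩
    rw [← h₂, hr', hc y]
  · rintro ⟨hc, hl, hm, hr⟩
    have hc' := mem_commutantS.1 (star_mem_commutantS_iff.2 hc)
    have hm' := mem_midNucS.1 (star_mem_midNucS_iff.2 hm)
    have hr' := mem_rightNucS.1 (star_mem_rightNucS_iff.2 hl)
    rw [mem_commutantS] at hc
    rw [mem_leftNucS] at hl
    rw [mem_rightNucS] at hr
    refine ⟨mem_rightNucS.2 hr, fun x y => ?_, fun x y => ?_, fun x y => ?_⟩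
    · rw [hr', ← hc' x, hm']
    · rw [hr', star_mul, hc']
    · rw [hr, star_mul, star_star, hl, hc]

theorem mk_false_mem_midNucS_iff_mem_inter :
    ((a, false) : L × Bool) ∈ midNucS (CDmul star γ) ↔
      a ∈ midNucS (· * · : L → L → L) ∩ LCommutant L := by
  rw [mk_false_mem_midNucS_iff, Set.mem_inter_iff]
  constructor
  · rintro ⟨hm, h₂, -, -⟩
    exact ⟨hm, fun x => by simpa only [Loop.one_mul] using (h₂ x 1).symm⟩
  · rintro ⟨hm, hc⟩
    have hc' := mem_commutantS.1 (star_mem_commutantS_iff.2 hc)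
    have hm' := mem_midNucS.1 (star_mem_midNucS_iff.2 hm)
    rw [mem_commutantS] at hc
    refine ⟨hm, fun x y => ?_, fun x y => ?_, fun x y => ?_⟩
    · rw [← hc x, mem_midNucS.1 hm]
    · rw [hm', star_mul, hc']
    · rw [star_mul, ← hc' x, ← hm', hc' (star y)]

theorem mk_false_mem_nucS_iff_mem_centerS (hγc : γ ∈ LCommutant L)
    (hγl : γ ∈ leftNucS (· * · : L → L → L)) :
    ((a, false) : L × Bool) ∈ nucS (CDmul star γ) ↔ a ∈ LCenter L := by
  rw [nucS, Set.mem_inter_iff, Set.mem_inter_iff, mk_false_mem_leftNucS_iff_mem_centerS hγc hγl,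
    mk_false_mem_midNucS_iff_mem_inter, mk_false_mem_rightNucS_iff_mem_centerS]
  refine ⟨And.right, fun h => ⟨⟨h, ?_⟩, h⟩⟩
  obtain ⟨hc, -, hm, -⟩ := mem_centerS.1 h
  exact ⟨hm, hc⟩

end CDmul

/-- Intersections with `L` of the nuclei of the double `M = D(L,*,γ)`:
`Nucₗ(M) ∩ L = Nucᵣ(M) ∩ L = Z(L)`, `Nucₘ(M) ∩ L = Nucₘ(L) ∩ K(L)`, and
`Nuc(M) ∩ L = Z(L)`. -/
theorem stmt14 {L : Type u} [Loop L] (star : L → L)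
    (hstar2 : ∀ a : L, star (star a) = a)
    (hanti : ∀ a b : L, star (a * b) = star b * star a)
    (γ : L) (hγ : γ ∈ LCenter L) :
    ({a : L | ((a, false) : L × Bool) ∈ leftNucS (CDmul star γ)} = LCenter L) ∧
    ({a : L | ((a, false) : L × Bool) ∈ rightNucS (CDmul star γ)} = LCenter L) ∧
    ({a : L | ((a, false) : L × Bool) ∈ midNucS (CDmul star γ)}
        = midNucS (fun x y : L => x * y) ∩ LCommutant L) ∧
    ({a : L | ((a, false) : L × Bool) ∈ nucS (CDmul star γ)} = LCenter L) := by
  let _ : StarMul L := { star, star_involutive := hstar2, star_mul := hanti }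
  obtain ⟨hγc, hγl, -, -⟩ := mem_centerS.1 hγ
  refine ⟨?_, ?_, ?_, ?_⟩ <;> ext a
  · exact CDmul.mk_false_mem_leftNucS_iff_mem_centerS hγc hγl
  · exact CDmul.mk_false_mem_rightNucS_iff_mem_centerS
  · exact CDmul.mk_false_mem_midNucS_iff_mem_inter
  · exact CDmul.mk_false_mem_nucS_iff_mem_centerS hγc hγl
end

section
/- Let (L,*) be a loop with a non-identity involution, γ central, and M = D(L,*,γ). Then Z(M) = Z(L,*), the set of symmetric central elements of L. If instead * is the identity on L, then Z(D(L,id,γ)) = Z(L) ∪ Z(L)j = D(Z(L), id, γ). -/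
universe u

/-!
An element `e` of a magma is central as soon as left and right multiplication by `e` agree with
one map `s` that commutes with multiplication on either side; for `(c, false)` with `c` central
and symmetric, `s (a, b) = (c * a, b)` is such a map. Conversely, the embedding `a ↦ (a, false)`
is multiplicative and injective, so it reflects centrality, and commuting with `j = (1, true)`
forces `c* = c`. An element `(c, true)` commutes with every `a` only if `c * a = c * a*`, i.e.
only if `*` is the identity; then the anti-automorphism `*` makes `L` commutative, where the
left nucleus is already the centre, and `j` is central, so `(c, true) = c · j` is central exactly
when `c` is.
-/

section Magma
variable {M N : Type*} (mul : M → M → M)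

theorem mem_centerS_of_scaling {e : M} (s : M → M) (hl : ∀ x, mul e x = s x)
    (hr : ∀ x, mul x e = s x) (hsl : ∀ x y, mul (s x) y = s (mul x y))
    (hsr : ∀ x y, mul x (s y) = s (mul x y)) : e ∈ centerS mul :=
  ⟨fun x => by rw [hl, hr],
    ⟨fun x y => by rw [hl, hl, hsl], fun x y => by rw [hr, hl, hsl, hsr]⟩,
    fun x y => by rw [hr, hr, hsr]⟩

theorem left_comm_of_mem_centerS {c : M} (hc : c ∈ centerS mul) (x y : M) :
    mul x (mul c y) = mul c (mul x y) := by
  rw [← hc.2.1.2, ← hc.1, hc.2.1.1]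

theorem mul_mem_centerS {a b : M} (ha : a ∈ centerS mul) (hb : b ∈ centerS mul) :
    mul a b ∈ centerS mul :=
  mem_centerS_of_scaling mul (fun x => mul a (mul b x)) (fun x => ha.2.1.1 b x)
    (fun x => by rw [← ha.2.1.2, ← ha.1, ha.2.1.1, hb.1])
    (fun x y => by rw [ha.2.1.1, hb.2.1.1])
    (fun x y => by
      rw [left_comm_of_mem_centerS mul ha, left_comm_of_mem_centerS mul hb])

theorem mem_centerS_of_map {mulN : N → N → N} {f : M → N} (hf : Function.Injective f)
    (hmul : ∀ x y, f (mul x y) = mulN (f x) (f y)) {a : M} (ha : f a ∈ centerS mulN) :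
    a ∈ centerS mul := by
  obtain ⟨hcomm, ⟨hl, hm⟩, hr⟩ := ha
  refine ⟨fun x => hf ?_, ⟨fun x y => hf ?_, fun x y => hf ?_⟩, fun x y => hf ?_⟩ <;>
    simp only [hmul]
  exacts [hcomm _, hl _ _, hm _ _, hr _ _]

theorem mem_centerS_of_mem_leftNucS (hcomm : ∀ x y, mul x y = mul y x) {a : M}
    (ha : a ∈ leftNucS mul) : a ∈ centerS mul :=
  ⟨fun x => hcomm a x,
    ⟨ha, fun x y => by rw [hcomm x a, ha, hcomm x (mul a y), ha, hcomm y x]⟩,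
    fun x y => by rw [hcomm _ a, hcomm y a, hcomm x (mul a y), ha, hcomm y x]⟩

end Magma

section CenterMul
variable {M : Type*} [Mul M] {c : M}

theorem mul_comm_of_mem_centerS (hc : c ∈ centerS (fun x y : M => x * y)) (x : M) :
    x * c = c * x :=
  (hc.1 x).symm

theorem mul_assoc_of_mem_centerS (hc : c ∈ centerS (fun x y : M => x * y)) (x y : M) :
    c * x * y = c * (x * y) :=
  hc.2.1.1 x y

theorem mul_left_comm_of_mem_centerS (hc : c ∈ centerS (fun x y : M => x * y)) (x y : M) :
    x * (c * y) = c * (x * y) :=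
  left_comm_of_mem_centerS _ hc x y

end CenterMul

theorem mul_comm_of_star_eq_self {M : Type*} [Mul M] {star : M → M}
    (hanti : ∀ a b : M, star (a * b) = star b * star a) (hs : ∀ a, star a = a) (a b : M) :
    a * b = b * a := by
  simpa only [hs] using hanti a b

theorem Loop.mul_left_cancel_s15 {L : Type u} [Loop L] {a b c : L} (h : a * b = a * c) : b = c := by
  rw [← Loop.ldiv_mul a b, h, Loop.ldiv_mul]

section Double
variable {L : Type u} [Loop L] {star : L → L} {γ : L}

theorem mem_center_of_mk_false_mem_centerS_CDmul {c : L}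
    (h : (c, false) ∈ centerS (CDmul star γ)) : c ∈ LCenter L :=
  mem_centerS_of_map _ (f := fun a => (a, false)) (fun _ _ h => congrArg Prod.fst h)
    (fun _ _ => rfl) h

theorem star_eq_self_of_mk_false_mem_centerS_CDmul {c : L}
    (h : (c, false) ∈ centerS (CDmul star γ)) : star c = c := by
  have hj : ((1 : L) * c, true) = (1 * star c, true) := h.1 (1, true)
  simpa only [Loop.one_mul, Prod.mk.injEq, and_true, eq_comm] using hj

theorem star_eq_self_of_mk_true_mem_centerS_CDmul {c : L}
    (h : (c, true) ∈ centerS (CDmul star γ)) (a : L) : star a = a := by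
  have ha : (c * star a, true) = (c * a, true) := h.1 (a, false)
  exact Loop.mul_left_cancel_s15 (Prod.mk.inj ha).1

theorem mem_center_of_mk_true_mem_centerS_CDmul
    (hanti : ∀ a b : L, star (a * b) = star b * star a) {c : L}
    (h : (c, true) ∈ centerS (CDmul star γ)) : c ∈ LCenter L := by
  have hs := star_eq_self_of_mk_true_mem_centerS_CDmul h
  refine mem_centerS_of_mem_leftNucS _ (mul_comm_of_star_eq_self hanti hs) fun x y => ?_
  have hxy : ((c * star x) * star y, true) = (c * star (x * y), true) :=
    h.2.1.1 (x, false) (y, false)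
  simpa only [hs, Prod.mk.injEq, and_true] using hxy

theorem mk_false_mem_centerS_CDmul (hanti : ∀ a b : L, star (a * b) = star b * star a) {c : L}
    (hc : c ∈ LCenter L) (hcs : star c = c) : (c, false) ∈ centerS (CDmul star γ) := by
  refine mem_centerS_of_scaling _ (fun x => (c * x.1, x.2)) ?_ ?_ ?_ ?_
  · rintro ⟨a, _ | _⟩ <;> simp [CDmul, mul_comm_of_mem_centerS hc]
  · rintro ⟨a, _ | _⟩ <;> simp [CDmul, mul_comm_of_mem_centerS hc, hcs]
  · rintro ⟨a, _ | _⟩ ⟨b, _ | _⟩ <;>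
      simp [CDmul, mul_assoc_of_mem_centerS hc, mul_left_comm_of_mem_centerS hc]
  · rintro ⟨a, _ | _⟩ ⟨b, _ | _⟩ <;>
      simp [CDmul, hanti, hcs, mul_comm_of_mem_centerS hc, mul_assoc_of_mem_centerS hc,
        mul_left_comm_of_mem_centerS hc]

theorem mk_false_mem_centerS_CDmul_iff (hanti : ∀ a b : L, star (a * b) = star b * star a)
    {c : L} : (c, false) ∈ centerS (CDmul star γ) ↔ c ∈ LCenter L ∧ star c = c :=
  ⟨fun h =>
    ⟨mem_center_of_mk_false_mem_centerS_CDmul h, star_eq_self_of_mk_false_mem_centerS_CDmul h⟩,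
    fun h => mk_false_mem_centerS_CDmul hanti h.1 h.2⟩

theorem one_mk_true_mem_centerS_CDmul_id (hcomm : ∀ a b : L, a * b = b * a)
    (hγ : γ ∈ LCenter L) : ((1 : L), true) ∈ centerS (CDmul id γ) := by
  refine mem_centerS_of_scaling _ (fun | (a, false) => (a, true) | (a, true) => (γ * a, false))
    ?_ ?_ ?_ ?_
  · rintro ⟨a, _ | _⟩ <;> simp [CDmul, Loop.one_mul, Loop.mul_one]
  · rintro ⟨a, _ | _⟩ <;> simp [CDmul, Loop.one_mul]
  · rintro ⟨a, _ | _⟩ ⟨b, _ | _⟩ <;>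
      simp [CDmul, mul_assoc_of_mem_centerS hγ, mul_left_comm_of_mem_centerS hγ]
  · rintro ⟨a, _ | _⟩ ⟨b, _ | _⟩ <;>
      simp [CDmul, mul_left_comm_of_mem_centerS hγ, hcomm]

theorem mk_true_mem_centerS_CDmul_id (hcomm : ∀ a b : L, a * b = b * a) (hγ : γ ∈ LCenter L)
    {c : L} (hc : c ∈ LCenter L) : (c, true) ∈ centerS (CDmul id γ) := by
  have hcj := mul_mem_centerS _ (mk_false_mem_centerS_CDmul hcomm hc rfl)
    (one_mk_true_mem_centerS_CDmul_id hcomm hγ)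
  simpa only [CDmul, Loop.one_mul] using hcj

end Double

theorem stmt15_general {L : Type u} [Loop L] (star : L → L)
    (hanti : ∀ a b : L, star (a * b) = star b * star a)
    (γ : L) (hγ : γ ∈ LCenter L) :
    (¬ (∀ a : L, star a = a) →
      centerS (CDmul star γ)
        = {x : L × Bool | ∃ a : L, a ∈ LCenter L ∧ star a = a ∧ x = (a, false)}) ∧
    ((∀ a : L, star a = a) →
      centerS (CDmul star γ) = {x : L × Bool | x.1 ∈ LCenter L}) := by
  constructor
  · intro hne
    ext ⟨a, _ | _⟩
    · simp [mk_false_mem_centerS_CDmul_iff hanti]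
    · simpa using fun h => hne (star_eq_self_of_mk_true_mem_centerS_CDmul h)
  · intro hs
    obtain rfl : star = id := funext hs
    have hcomm := mul_comm_of_star_eq_self hanti hs
    ext ⟨a, _ | _⟩
    · simp [mk_false_mem_centerS_CDmul_iff hanti]
    · exact ⟨mem_center_of_mk_true_mem_centerS_CDmul hanti,
        mk_true_mem_centerS_CDmul_id hcomm hγ⟩

/-- Center of the double: if `*` is not the identity then
`Z(D(L,*,γ)) = Z(L,*)` (the symmetric central elements of `L`), while if `*`
is the identity then `Z(D(L,id,γ)) = Z(L) ∪ Z(L)j`. -/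
theorem stmt15 {L : Type u} [Loop L] (star : L → L)
    (hstar2 : ∀ a : L, star (star a) = a)
    (hanti : ∀ a b : L, star (a * b) = star b * star a)
    (γ : L) (hγ : γ ∈ LCenter L) :
    (¬ (∀ a : L, star a = a) →
      centerS (CDmul star γ)
        = {x : L × Bool | ∃ a : L, a ∈ LCenter L ∧ star a = a ∧ x = (a, false)}) ∧
    ((∀ a : L, star a = a) →
      centerS (CDmul star γ) = {x : L × Bool | x.1 ∈ LCenter L}) :=
  stmt15_general star hanti γ hγ
end
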